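/- arXiv:math/9908171 — 2 statements merged into one kernel-verified Lean document; each statement's English description precedes it below -/
import Mathlib

section
/- In the algebra A over Z[c] defined above, the composite map m∘Δ∘m∘Δ : A → A is the zero map. -/
open TensorProduct

noncomputable section

abbrev R : Type := Polynomial ℤ
abbrev A : Type := R × R

/-- The `R`-linear map out of `A = R·1 ⊕ R·X` sending `1 ↦ p` and `X ↦ q`. -/
def lmap {P : Type*} [AddCommGroup P] [Module R P] (p q : P) : A →ₗ[R] P :=
  (LinearMap.toSpanSingleton R P p).coprod (LinearMap.toSpanSingleton R P q)

/-- The basis element `1` of `A`. -/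
def one' : A := (1, 0)

/-- The basis element `X` of `A`. -/
def Xa : A := (0, 1)

/-- Multiplication `m : A ⊗ A → A`, with `1·1 = 1`, `1·X = X·1 = X`, `X² = 0`. -/
def mul : A ⊗[R] A →ₗ[R] A :=
  TensorProduct.lift (lmap LinearMap.id (lmap Xa 0))

/-- Comultiplication `Δ(1) = 1⊗X + X⊗1 + c X⊗X`, `Δ(X) = X⊗X`. -/
def Δ : A →ₗ[R] A ⊗[R] A :=
  lmap (one' ⊗ₜ[R] Xa + Xa ⊗ₜ[R] one' + (Polynomial.X : R) • (Xa ⊗ₜ[R] Xa)) (Xa ⊗ₜ[R] Xa)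

/-- Counit `ε(1) = -c`, `ε(X) = 1`. -/
def ε : A →ₗ[R] R := lmap (-Polynomial.X) 1

/-!
`m ∘ Δ` sends `1 ↦ X + X + c X² = 2X` and `X ↦ X² = 0`, so it is the map `a ↦ 2X·a`; composing it
with itself multiplies by `4X² = 0`.
-/

section

variable {P : Type*} [AddCommGroup P] [Module R P]

@[simp]
theorem lmap_one' (p q : P) : lmap p q one' = p := by
  simp [lmap, one']

@[simp]
theorem lmap_Xa (p q : P) : lmap p q Xa = q := by
  simp [lmap, Xa]

theorem A_hom_ext {f g : A →ₗ[R] P} (h1 : f one' = g one') (hX : f Xa = g Xa) : f = g :=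
  LinearMap.prod_ext (LinearMap.ext_ring h1) (LinearMap.ext_ring hX)

end

@[simp]
theorem mul_one'_tmul (a : A) : mul (one' ⊗ₜ[R] a) = a := by
  simp [mul]

@[simp]
theorem mul_Xa_tmul_one' : mul (Xa ⊗ₜ[R] one') = Xa := by
  simp [mul]

@[simp]
theorem mul_Xa_tmul_Xa : mul (Xa ⊗ₜ[R] Xa) = 0 := by
  simp [mul]

theorem mul_comp_Δ : mul ∘ₗ Δ = lmap (Xa + Xa) 0 := by
  refine A_hom_ext ?_ ?_ <;> simp [Δ]

theorem lmap_zero_comp_self_of_mem_span {p : A} (hp : p ∈ R ∙ Xa) :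
    lmap p 0 ∘ₗ lmap p 0 = 0 := by
  obtain ⟨r, rfl⟩ := Submodule.mem_span_singleton.mp hp
  refine A_hom_ext ?_ ?_ <;> simp

/-- `m ∘ Δ ∘ m ∘ Δ = 0 : A → A`. -/
theorem stmt1 : mul ∘ₗ Δ ∘ₗ mul ∘ₗ Δ = 0 := by
  rw [← LinearMap.comp_assoc, mul_comp_Δ]
  exact lmap_zero_comp_self_of_mem_span (Submodule.add_mem _ (Submodule.mem_span_singleton_self Xa)
    (Submodule.mem_span_singleton_self Xa))
end
end

section
/- Let ℵ = ι − c·(ι∘m∘Δ) : A → A⊗A, where ι(t)=1⊗t. Then A⊗A = ℵ(A) ⊕ Δ(A) as R-modules. -/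
/-!
Every element of `A ⊗ A` is uniquely `1 ⊗ u + X ⊗ v`. Since `m (Δ x) = 2 x₁ X`, we get
`ℵ x = 1 ⊗ (x₁, x₂ - 2 c x₁)`, so `ℵ(A) = 1 ⊗ A`, which is the kernel of the projection
`π : 1 ⊗ u + X ⊗ v ↦ v`. On the other hand `π (Δ x) = (x₁, c x₁ + x₂)` is a unitriangular change
of coordinates, so `π` maps `Δ(A)` isomorphically onto `A`, and `Δ(A)` is a complement of `ker π`.
-/

open TensorProduct

noncomputable section

/-- `ι : A → A⊗A`, `t ↦ 1⊗t`. -/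
def ι : A →ₗ[R] A ⊗[R] A := TensorProduct.mk R A A one'

/-- `ℵ = ι − c·(ι∘m∘Δ)`. -/
def aleph : A →ₗ[R] A ⊗[R] A := ι - (Polynomial.X : R) • (ι ∘ₗ mul ∘ₗ Δ)

namespace LinearMap

variable {S M N : Type*} [Ring S] [AddCommGroup M] [AddCommGroup N] [Module S M] [Module S N]

theorem isCompl_ker_range_of_bijective_comp (p : N →ₗ[S] M) (g : M →ₗ[S] N)
    (h : Function.Bijective (p ∘ₗ g)) : IsCompl (ker p) (range g) := by
  constructor
  · rw [Submodule.disjoint_def]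
    rintro _ hx ⟨b, rfl⟩
    have : b = 0 := h.1 (by simpa using hx)
    rw [this, map_zero]
  · rw [codisjoint_iff_le_sup]
    intro x _
    obtain ⟨b, hb⟩ := h.2 (p x)
    refine Submodule.mem_sup.2 ⟨x - g b, ?_, g b, mem_range_self g b, sub_add_cancel x (g b)⟩
    rw [mem_ker, map_sub, ← comp_apply, hb, sub_self]

end LinearMap

lemma lmap_apply {P : Type*} [AddCommGroup P] [Module R P] (p q : P) (x : A) :
    lmap p q x = x.1 • p + x.2 • q := by
  simp [lmap]

lemma eq_smul_one'_add_smul_Xa (x : A) : x = x.1 • one' + x.2 • Xa := by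
  simp [one', Xa]

/-- The coefficient `u` of `1 ⊗ u + X ⊗ v`. -/
def coordOne : A ⊗[R] A →ₗ[R] A := TensorProduct.lift (lmap LinearMap.id 0)

/-- The coefficient `v` of `1 ⊗ u + X ⊗ v`. -/
def coordX : A ⊗[R] A →ₗ[R] A := TensorProduct.lift (lmap 0 LinearMap.id)

lemma ι_coordOne_add_tmul_coordX (t : A ⊗[R] A) : ι (coordOne t) + Xa ⊗ₜ coordX t = t := by
  suffices ι ∘ₗ coordOne + (TensorProduct.mk R A A Xa) ∘ₗ coordX = LinearMap.id from
    LinearMap.congr_fun this t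
  refine TensorProduct.ext' fun a b => ?_
  conv_rhs => rw [LinearMap.id_apply, eq_smul_one'_add_smul_Xa a]
  simp [coordOne, coordX, ι, lmap_apply, add_tmul, smul_tmul]

lemma ker_coordX : LinearMap.ker coordX = LinearMap.range ι := by
  ext t
  constructor
  · intro ht
    rw [LinearMap.mem_ker] at ht
    refine ⟨coordOne t, ?_⟩
    simpa [ht] using ι_coordOne_add_tmul_coordX t
  · rintro ⟨u, rfl⟩
    simp [coordX, ι, one', lmap_apply]

lemma mul_Δ (x : A) : mul (Δ x) = (0, 2 * x.1) := by
  simp [Δ, mul, lmap_apply, one', Xa, two_mul]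

lemma aleph_apply (x : A) : aleph x = ι (x.1, x.2 - 2 * Polynomial.X * x.1) := by
  simp only [aleph, LinearMap.sub_apply, LinearMap.smul_apply, LinearMap.comp_apply, mul_Δ,
    ← map_smul, ← map_sub]
  congr 1
  refine Prod.ext ?_ ?_ <;>
    simp only [Prod.smul_mk, smul_eq_mul, Prod.fst_sub, Prod.snd_sub] <;> ring

lemma range_aleph : LinearMap.range aleph = LinearMap.range ι := by
  ext t
  constructor
  · rintro ⟨x, rfl⟩
    exact ⟨_, (aleph_apply x).symm⟩
  · rintro ⟨u, rfl⟩
    exact ⟨(u.1, u.2 + 2 * Polynomial.X * u.1), by simp [aleph_apply]⟩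

lemma coordX_Δ (x : A) : coordX (Δ x) = (x.1, Polynomial.X * x.1 + x.2) := by
  simp [coordX, Δ, lmap_apply, one', Xa, mul_comm]

lemma bijective_coordX_comp_Δ : Function.Bijective (coordX ∘ₗ Δ) := by
  refine Function.bijective_iff_has_inverse.2
    ⟨fun v => (v.1, v.2 - Polynomial.X * v.1), fun x => ?_, fun v => ?_⟩ <;>
  simp [coordX_Δ]

/-- `A⊗A = ℵ(A) ⊕ Δ(A)` as `R`-modules. -/
theorem stmt7 :
    IsCompl (LinearMap.range aleph) (LinearMap.range Δ) := by
  rw [range_aleph, ← ker_coordX]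
  exact LinearMap.isCompl_ker_range_of_bijective_comp coordX Δ bijective_coordX_comp_Δ
end
end
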